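/- Let f : ℝ → ℝ be twice continuously differentiable such that f and f' have polynomial growth and f·f'' is integrable with respect to γ. Then ∫ t²·f(t)² dγ(t) = ∫ f² dγ + 2·∫ f·f'' dγ + 2·∫ (f')² dγ. -/

import Mathlib

open MeasureTheory ProbabilityTheory

/-- The centered Gaussian measure `N(0, σ²)` on `ℝ`. -/
noncomputable def gaussMeasure (σ : ℝ) : Measure ℝ :=
  gaussianReal 0 (Real.toNNReal (σ ^ 2))

/-- A function `f : ℝ → ℝ` has polynomial growth if `|f t| ≤ C (1 + |t|)^k`. -/
def PolyGrowth (f : ℝ → ℝ) : Prop :=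
  ∃ C : ℝ, ∃ k : ℕ, ∀ t : ℝ, |f t| ≤ C * (1 + |t|) ^ k

lemma pdf_eq (x : ℝ) :
    gaussianPDFReal 0 1 x = (Real.sqrt (2 * Real.pi))⁻¹ * Real.exp (-x ^ 2 / 2) := by
  simp [gaussianPDFReal]

lemma pdf_pos (x : ℝ) : 0 < gaussianPDFReal 0 1 x :=
  gaussianPDFReal_pos 0 1 x one_ne_zero

lemma hasDerivAt_pdf (t : ℝ) :
    HasDerivAt (gaussianPDFReal 0 1) (-t * gaussianPDFReal 0 1 t) t := by
  have h1 : HasDerivAt (fun x : ℝ => -x ^ 2 / 2) (-t) t := by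
    have h := ((hasDerivAt_pow 2 t).neg).div_const 2
    refine h.congr_deriv ?_
    push_cast
    ring
  have h2 := (h1.exp).const_mul (Real.sqrt (2 * Real.pi))⁻¹
  have hfe : gaussianPDFReal 0 1 = fun x => (Real.sqrt (2 * Real.pi))⁻¹ * Real.exp (-x ^ 2 / 2) :=
    funext pdf_eq
  rw [hfe]
  refine h2.congr_deriv ?_
  beta_reduce
  ring

lemma integrable_polyGrowth {g : ℝ → ℝ} (hc : Continuous g) (hg : PolyGrowth g) :
    Integrable (fun t => g t * gaussianPDFReal 0 1 t) := by
  obtain ⟨C, k, hC⟩ := hg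
  have hC0 : 0 ≤ C := by have := hC 0; simp at this; exact le_trans (abs_nonneg _) this
  have hcpos : 0 < (Real.sqrt (2 * Real.pi))⁻¹ :=
    inv_pos.2 (Real.sqrt_pos.2 (by positivity))
  have hcont : Continuous (gaussianPDFReal 0 1) := by
    rw [funext pdf_eq]
    continuity
  refine Integrable.mono
    (g := fun t => C * (Real.sqrt (2 * Real.pi))⁻¹ * Real.exp ((k : ℝ) ^ 2)
      * Real.exp (-(1/4 : ℝ) * t ^ 2))
    ((integrable_exp_neg_mul_sq (by norm_num)).const_mul _)
    (hc.mul hcont).aestronglyMeasurable ?_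
  refine Filter.Eventually.of_forall fun t => ?_
  simp only [Real.norm_eq_abs]
  rw [abs_mul, abs_of_pos (pdf_pos t), pdf_eq]
  have h1 : (1 + |t|) ^ k ≤ Real.exp ((k : ℝ) * |t|) := by
    rw [Real.exp_nat_mul]
    have hb : (1 : ℝ) + |t| ≤ Real.exp |t| := by linarith [Real.add_one_le_exp |t|]
    exact pow_le_pow_left₀ (by positivity) hb k
  have h2 : |g t| ≤ C * Real.exp ((k : ℝ) * |t|) := (hC t).trans (by gcongr)
  have h3 : Real.exp ((k : ℝ) * |t|) * Real.exp (-t ^ 2 / 2)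
      ≤ Real.exp ((k : ℝ) ^ 2) * Real.exp (-(1/4 : ℝ) * t ^ 2) := by
    rw [← Real.exp_add, ← Real.exp_add]
    apply Real.exp_le_exp.2
    nlinarith [sq_nonneg (|t| / 2 - (k : ℝ)), sq_abs t]
  have key : |g t| * ((Real.sqrt (2 * Real.pi))⁻¹ * Real.exp (-t ^ 2 / 2))
      ≤ C * (Real.sqrt (2 * Real.pi))⁻¹ * Real.exp ((k : ℝ) ^ 2)
        * Real.exp (-(1/4 : ℝ) * t ^ 2) := by
    calc |g t| * ((Real.sqrt (2 * Real.pi))⁻¹ * Real.exp (-t ^ 2 / 2))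
        ≤ (C * Real.exp ((k : ℝ) * |t|)) * ((Real.sqrt (2 * Real.pi))⁻¹
            * Real.exp (-t ^ 2 / 2)) :=
          mul_le_mul_of_nonneg_right h2 (by positivity)
      _ = C * (Real.sqrt (2 * Real.pi))⁻¹
            * (Real.exp ((k : ℝ) * |t|) * Real.exp (-t ^ 2 / 2)) := by ring
      _ ≤ C * (Real.sqrt (2 * Real.pi))⁻¹
            * (Real.exp ((k : ℝ) ^ 2) * Real.exp (-(1/4 : ℝ) * t ^ 2)) :=
          mul_le_mul_of_nonneg_left h3 (by positivity)
      _ = C * (Real.sqrt (2 * Real.pi))⁻¹ * Real.exp ((k : ℝ) ^ 2)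
            * Real.exp (-(1/4 : ℝ) * t ^ 2) := by ring
  exact key.trans (le_abs_self _)

lemma stein {g g' : ℝ → ℝ} (hg : ∀ t, HasDerivAt g (g' t) t)
    (h1 : Integrable (fun t => g t * gaussianPDFReal 0 1 t))
    (h2 : Integrable (fun t => g' t * gaussianPDFReal 0 1 t))
    (h3 : Integrable (fun t => t * g t * gaussianPDFReal 0 1 t)) :
    ∫ t, t * g t * gaussianPDFReal 0 1 t = ∫ t, g' t * gaussianPDFReal 0 1 t := by
  have hF : ∀ t, HasDerivAt (fun x => g x * gaussianPDFReal 0 1 x)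
      (g' t * gaussianPDFReal 0 1 t - t * g t * gaussianPDFReal 0 1 t) t := by
    intro t
    have h := (hg t).mul (hasDerivAt_pdf t)
    refine h.congr_deriv ?_
    ring
  have h4 : Integrable
      (fun t => g' t * gaussianPDFReal 0 1 t - t * g t * gaussianPDFReal 0 1 t) := h2.sub h3
  have h0 := integral_eq_zero_of_hasDerivAt_of_integrable hF h4 h1
  rw [integral_sub h2 h3] at h0
  linarith

lemma integrable_gauss_iff {g : ℝ → ℝ} :
    Integrable g (gaussMeasure 1) ↔ Integrable (fun t => g t * gaussianPDFReal 0 1 t) := by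
  rw [gaussMeasure, show Real.toNNReal (1 ^ 2) = 1 by norm_num,
    gaussianReal_of_var_ne_zero 0 one_ne_zero]
  have hpdf : gaussianPDF 0 1 = fun x => ((Real.toNNReal (gaussianPDFReal 0 1 x) : NNReal) : ENNReal) := by
    funext x
    rw [gaussianPDF, ENNReal.ofReal]
  rw [hpdf, integrable_withDensity_iff_integrable_smul
    ((measurable_gaussianPDFReal 0 1).real_toNNReal)]
  constructor <;> intro h <;> refine h.congr (Filter.Eventually.of_forall fun x => ?_) <;>
    simp [NNReal.smul_def, Real.coe_toNNReal _ (gaussianPDFReal_nonneg 0 1 x), mul_comm]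

lemma integral_gauss_eq (g : ℝ → ℝ) :
    ∫ t, g t ∂(gaussMeasure 1) = ∫ t, g t * gaussianPDFReal 0 1 t := by
  rw [gaussMeasure, show Real.toNNReal (1 ^ 2) = 1 by norm_num,
    gaussianReal_of_var_ne_zero 0 one_ne_zero]
  have hpdf : gaussianPDF 0 1
      = fun x => ((Real.toNNReal (gaussianPDFReal 0 1 x) : NNReal) : ENNReal) := by
    funext x
    rw [gaussianPDF, ENNReal.ofReal]
  rw [hpdf, integral_withDensity_eq_integral_smul
    ((measurable_gaussianPDFReal 0 1).real_toNNReal) g]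
  refine integral_congr_ae (Filter.Eventually.of_forall fun x => ?_)
  simp [NNReal.smul_def, Real.coe_toNNReal _ (gaussianPDFReal_nonneg 0 1 x), mul_comm]

lemma PolyGrowth.mul {g h : ℝ → ℝ} (hg : PolyGrowth g) (hh : PolyGrowth h) :
    PolyGrowth (fun t => g t * h t) := by
  obtain ⟨C₁, k₁, h₁⟩ := hg
  obtain ⟨C₂, k₂, h₂⟩ := hh
  have hC₁ : 0 ≤ C₁ := by have := h₁ 0; simp at this; exact le_trans (abs_nonneg _) this
  refine ⟨C₁ * C₂, k₁ + k₂, fun t => ?_⟩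
  rw [abs_mul, pow_add]
  calc |g t| * |h t| ≤ (C₁ * (1 + |t|) ^ k₁) * (C₂ * (1 + |t|) ^ k₂) :=
        mul_le_mul (h₁ t) (h₂ t) (abs_nonneg _) (by positivity)
    _ = C₁ * C₂ * ((1 + |t|) ^ k₁ * (1 + |t|) ^ k₂) := by ring

lemma polyGrowth_id : PolyGrowth (fun t => t) :=
  ⟨1, 1, fun t => by simpa using le_add_of_nonneg_left zero_le_one⟩

/-- the Gaussian integration-by-parts identity
`‖t·f‖_γ² = ‖f‖_γ² + 2⟨f, f''⟩_γ + 2‖f'‖_γ²` from the proof of Lemma 4.2. -/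
theorem gaussian_integration_by_parts (f : ℝ → ℝ) (hf : ContDiff ℝ 2 f)
    (hfP : PolyGrowth f) (hf'P : PolyGrowth (deriv f))
    (hint : Integrable (fun t => f t * deriv (deriv f) t) (gaussMeasure 1)) :
    ∫ t, t ^ 2 * f t ^ 2 ∂(gaussMeasure 1) =
      (∫ t, f t ^ 2 ∂(gaussMeasure 1)) +
        2 * (∫ t, f t * deriv (deriv f) t ∂(gaussMeasure 1)) +
        2 * ∫ t, (deriv f t) ^ 2 ∂(gaussMeasure 1) := by
  have hfd : Differentiable ℝ f := hf.differentiable (by norm_num)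
  have hf1 : ContDiff ℝ 1 (deriv f) := by
    have h2 : ContDiff ℝ ((1 : WithTop ℕ∞) + 1) f := by
      convert hf using 2
      rfl
    exact (contDiff_succ_iff_deriv.mp h2).2.2
  have hf'd : Differentiable ℝ (deriv f) := hf1.differentiable one_ne_zero
  have hd1 : ∀ t, HasDerivAt f (deriv f t) t := fun t => (hfd t).hasDerivAt
  have hd2 : ∀ t, HasDerivAt (deriv f) (deriv (deriv f) t) t := fun t => (hf'd t).hasDerivAt
  have hcf : Continuous f := hf.continuous
  have hcf' : Continuous (deriv f) := hf1.continuous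
  have hcf'' : Continuous (deriv (deriv f)) := hf1.continuous_deriv le_rfl
  -- poly growth facts
  have pf2 : PolyGrowth (fun t => f t ^ 2) := by
    simpa only [← pow_two] using hfP.mul hfP
  have ptf2 : PolyGrowth (fun t => t * f t ^ 2) := by
    have := polyGrowth_id.mul pf2; exact this
  have pt2f2 : PolyGrowth (fun t => t * (t * f t ^ 2)) := polyGrowth_id.mul ptf2
  have ptff' : PolyGrowth (fun t => t * (f t * deriv f t)) := polyGrowth_id.mul (hfP.mul hf'P)
  have pff' : PolyGrowth (fun t => f t * deriv f t) := hfP.mul hf'P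
  have pf'2 : PolyGrowth (fun t => deriv f t ^ 2) := by
    simpa only [← pow_two] using hf'P.mul hf'P
  -- integrabilities (w.r.t. volume, with pdf weight)
  have I1 : Integrable (fun t => f t ^ 2 * gaussianPDFReal 0 1 t) :=
    integrable_polyGrowth (hcf.pow 2) pf2
  have I2 : Integrable (fun t => (t * f t ^ 2) * gaussianPDFReal 0 1 t) :=
    integrable_polyGrowth (continuous_id.mul (hcf.pow 2)) ptf2
  have I3 : Integrable (fun t => t * (t * f t ^ 2) * gaussianPDFReal 0 1 t) :=
    integrable_polyGrowth (continuous_id.mul (continuous_id.mul (hcf.pow 2))) pt2f2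
  have I6' : Integrable (fun t => t * (f t * deriv f t) * gaussianPDFReal 0 1 t) :=
    integrable_polyGrowth (continuous_id.mul (hcf.mul hcf')) ptff'
  have I5 : Integrable (fun t => (f t * deriv f t) * gaussianPDFReal 0 1 t) :=
    integrable_polyGrowth (hcf.mul hcf') pff'
  have I7 : Integrable (fun t => deriv f t ^ 2 * gaussianPDFReal 0 1 t) :=
    integrable_polyGrowth (hcf'.pow 2) pf'2
  have I8 : Integrable (fun t => (f t * deriv (deriv f) t) * gaussianPDFReal 0 1 t) :=
    integrable_gauss_iff.mp hint
  have I4 : Integrable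
      (fun t => (f t ^ 2 + t * (2 * f t * deriv f t)) * gaussianPDFReal 0 1 t) := by
    have h := I1.add (I6'.const_mul 2)
    refine h.congr (Filter.Eventually.of_forall fun t => ?_)
    simp only [Pi.add_apply]
    ring
  have I9 : Integrable
      (fun t => (deriv f t * deriv f t + f t * deriv (deriv f) t) * gaussianPDFReal 0 1 t) := by
    have h := I7.add I8
    refine h.congr (Filter.Eventually.of_forall fun t => ?_)
    simp only [Pi.add_apply]
    ring
  -- Stein step 1: g = t f²
  have hg1 : ∀ t, HasDerivAt (fun x => x * f x ^ 2)
      (f t ^ 2 + t * (2 * f t * deriv f t)) t := by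
    intro t
    have h := (hasDerivAt_id t).mul ((hd1 t).pow 2)
    refine h.congr_deriv ?_
    simp only [id_eq, Pi.pow_apply]
    push_cast
    ring
  have S1 := stein hg1 I2 I4 I3
  -- Stein step 2: g = f f'
  have hg2 : ∀ t, HasDerivAt (fun x => f x * deriv f x)
      (deriv f t * deriv f t + f t * deriv (deriv f) t) t := fun t => (hd1 t).mul (hd2 t)
  have S2 := stein hg2 I5 I9 I6'
  -- expand integrals
  rw [integral_gauss_eq, integral_gauss_eq, integral_gauss_eq, integral_gauss_eq]
  have E1 : ∫ t, t ^ 2 * f t ^ 2 * gaussianPDFReal 0 1 t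
      = ∫ t, t * (t * f t ^ 2) * gaussianPDFReal 0 1 t := by
    congr 1 with t
    ring
  have E2 : ∫ t, (f t ^ 2 + t * (2 * f t * deriv f t)) * gaussianPDFReal 0 1 t
      = (∫ t, f t ^ 2 * gaussianPDFReal 0 1 t)
        + 2 * ∫ t, t * (f t * deriv f t) * gaussianPDFReal 0 1 t := by
    rw [← integral_const_mul, ← integral_add I1 (I6'.const_mul 2)]
    congr 1 with t
    ring
  have E3 : ∫ t, (deriv f t * deriv f t + f t * deriv (deriv f) t) * gaussianPDFReal 0 1 t
      = (∫ t, deriv f t ^ 2 * gaussianPDFReal 0 1 t)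
        + ∫ t, (f t * deriv (deriv f) t) * gaussianPDFReal 0 1 t := by
    rw [← integral_add I7 I8]
    congr 1 with t
    ring
  rw [E1, S1, E2, S2, E3]
  ring
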